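/- For each θ ∈ (0, π/4], the line segment co{γ₁(θ), γ₃(t_θ)} is an exposed face of the convex set C = co(γ₁ ∪ γ₂ ∪ γ₃ ∪ γ₄), where it is exposed by the linear functional y_θ at value d_θ: that is, ⟨x, y_θ⟩ ≤ d_θ for all x ∈ C, with equality exactly on co{γ₁(θ), γ₃(t_θ)}. -/

import Mathlib

open Real Set RealInnerProductSpace

noncomputable def vec3 (a b c : ℝ) : EuclideanSpace ℝ (Fin 3) :=
  (WithLp.equiv 2 (Fin 3 → ℝ)).symm ![a, b, c]

noncomputable def γ₁ (t : ℝ) : EuclideanSpace ℝ (Fin 3) := vec3 0 (-sin t) (cos t - 1)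
noncomputable def γ₂ (t : ℝ) : EuclideanSpace ℝ (Fin 3) := vec3 0 (cos t - 1) (-sin t)
noncomputable def γ₃ (t : ℝ) : EuclideanSpace ℝ (Fin 3) := vec3 (-sin t) (1 - cos t) 0
noncomputable def γ₄ (t : ℝ) : EuclideanSpace ℝ (Fin 3) := vec3 (cos t - 1) (sin t) 0

noncomputable def tθ (θ : ℝ) : ℝ := arccos (sin θ / (1 + sin θ - cos θ))

noncomputable def yθ (θ : ℝ) : EuclideanSpace ℝ (Fin 3) :=
  vec3 (-(sin (tθ θ) * sin θ)) (-(cos (tθ θ) * sin θ)) (cos (tθ θ) * cos θ)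

noncomputable def dθ (θ : ℝ) : ℝ := cos (tθ θ) * (1 - cos θ)

/-!
Along each curve the functional `⟪·, yθ θ⟫` is an explicit trigonometric expression. On `γ₁` and
`γ₃` it equals `dθ θ` minus a positive multiple of `1 - cos (u - θ)`, resp. `1 - cos (u - tθ θ)`;
`tθ` is chosen exactly so that `cos tθ (1 - cos θ) = sin θ (1 - cos tθ)`, i.e. so that both curves
reach the same maximum `dθ θ`. On `γ₂` and `γ₄` it is `≤ 0` since `sin` increases on `[0, π / 2]`.
Hence `dθ θ` is attained on the curves exactly at `γ₁ θ` and `γ₃ tθ`, and a face of a convex hull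
cut out by a supporting hyperplane is the convex hull of the generators on that hyperplane.
-/

section Exposed

variable {𝕜 E : Type*} [Field 𝕜] [LinearOrder 𝕜] [IsStrictOrderedRing 𝕜] [AddCommGroup E]
  [Module 𝕜 E] {s : Set E} {f : E →ₗ[𝕜] 𝕜} {d : 𝕜}

theorem LinearMap.le_of_mem_convexHull (h : ∀ x ∈ s, f x ≤ d) {x : E}
    (hx : x ∈ convexHull 𝕜 s) : f x ≤ d :=
  convexHull_min h (convex_halfSpace_le f.isLinear d) hx

theorem LinearMap.sep_convexHull_eq (h : ∀ x ∈ s, f x ≤ d) :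
    {x ∈ convexHull 𝕜 s | f x = d} = convexHull 𝕜 {x ∈ s | f x = d} := by
  set H := convexHull 𝕜 {x ∈ s | f x = d}
  have hH : H ⊆ {x | f x = d} :=
    convexHull_min (fun x hx => hx.2) (convex_hyperplane f.isLinear d)
  refine Subset.antisymm ?_ fun x hx => ⟨convexHull_mono (sep_subset _ _) hx, hH hx⟩
  -- Mixing in a point strictly below the hyperplane with positive weight stays strictly below.
  have hconvex : Convex 𝕜 ({x | f x < d} ∪ H) := by
    have hle : ∀ w ∈ {x | f x < d} ∪ H, f w ≤ d :=
      fun w hw => hw.elim le_of_lt fun hw => (hH hw).le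
    rw [convex_iff_openSegment_subset]
    rintro x hx y hy z ⟨a, b, ha, hb, hab, rfl⟩
    by_cases hxy : x ∈ H ∧ y ∈ H
    · exact Or.inr <|
        (convex_convexHull 𝕜 _).openSegment_subset hxy.1 hxy.2 ⟨a, b, ha, hb, hab, rfl⟩
    · have hlt : f x < d ∨ f y < d := by
        rcases hx with hx | hx <;> rcases hy with hy | hy <;> tauto
      have hx' := hle x hx
      have hy' := hle y hy
      left
      simp only [mem_ofPred_eq, map_add, map_smul, smul_eq_mul]
      have hd : d = a * d + b * d := by rw [← add_mul, hab, one_mul]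
      rcases hlt with hlt | hlt
      · linarith [mul_lt_mul_of_pos_left hlt ha, mul_le_mul_of_nonneg_left hy' hb.le]
      · linarith [mul_le_mul_of_nonneg_left hx' ha.le, mul_lt_mul_of_pos_left hlt hb]
  rintro x ⟨hx, hfx⟩
  have hsub : s ⊆ {x | f x < d} ∪ H := fun z hz =>
    (h z hz).lt_or_eq.imp_right fun e => subset_convexHull 𝕜 _ ⟨hz, e⟩
  exact (convexHull_min hsub hconvex hx).resolve_left hfx.not_lt

end Exposed

theorem inner_vec3 (a b c a' b' c' : ℝ) :
    ⟪vec3 a b c, vec3 a' b' c'⟫ = a * a' + b * b' + c * c' := by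
  simp [vec3, PiLp.inner_apply, Fin.sum_univ_three]
  ring

theorem Real.cos_lt_one_of_abs_lt {x : ℝ} (hx : |x| < 2 * π) (hx0 : x ≠ 0) : cos x < 1 := by
  rw [abs_lt] at hx
  exact (cos_le_one x).lt_of_ne (mt (cos_eq_one_iff_of_lt_of_lt hx.1 hx.2).mp hx0)

theorem one_sub_cos_le_mul_sin {θ : ℝ} (hθ : θ ∈ Icc 0 (π / 4)) :
    1 - cos θ ≤ (√2 - 1) * sin θ := by
  have hcos : √2 / 2 ≤ cos θ :=
    cos_pi_div_four ▸ cos_le_cos_of_nonneg_of_le_pi hθ.1 (by linarith [pi_pos]) hθ.2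
  have hsin : 0 ≤ sin θ := sin_nonneg_of_nonneg_of_le_pi hθ.1 (by linarith [pi_pos, hθ.2])
  have hsqrt : √2 ^ 2 = 2 := sq_sqrt zero_le_two
  have hsqrt_gt : 1 < √2 := by nlinarith [sqrt_nonneg 2]
  -- `(√2 - 1) sin θ - (1 - cos θ)` times its conjugate is this product.
  have hprod : 0 ≤ (1 - cos θ) * ((2 - √2) * (2 * cos θ - √2)) :=
    mul_nonneg (by linarith [cos_le_one θ]) (mul_nonneg (by nlinarith) (by linarith))
  nlinarith [sin_sq_add_cos_sq θ, mul_nonneg hsin (by linarith : (0 : ℝ) ≤ √2 - 1)]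

section Witness

variable {θ : ℝ}

theorem tθ_arg_mem (hθ : θ ∈ Ioc 0 (π / 4)) :
    sin θ / (1 + sin θ - cos θ) ∈ Ico (√2 / 2) 1 := by
  have hsin : 0 < sin θ := sin_pos_of_pos_of_lt_pi hθ.1 (by linarith [pi_pos, hθ.2])
  have hcos : cos θ < 1 :=
    cos_lt_one_of_abs_lt (by rw [abs_of_pos hθ.1]; linarith [pi_pos, hθ.2]) hθ.1.ne'
  have hpos : 0 < 1 + sin θ - cos θ := by linarith
  have hsqrt : √2 ^ 2 = 2 := sq_sqrt zero_le_two
  refine ⟨(le_div_iff₀ hpos).mpr ?_, (div_lt_one hpos).mpr (by linarith)⟩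
  nlinarith [one_sub_cos_le_mul_sin (Ioc_subset_Icc_self hθ), sqrt_nonneg 2]

theorem cos_tθ (hθ : θ ∈ Ioc 0 (π / 4)) : cos (tθ θ) = sin θ / (1 + sin θ - cos θ) := by
  have h := tθ_arg_mem hθ
  exact cos_arccos (by linarith [h.1, sqrt_nonneg 2]) h.2.le

theorem tθ_mem (hθ : θ ∈ Ioc 0 (π / 4)) : tθ θ ∈ Ioc 0 (π / 4) :=
  ⟨arccos_pos.mpr (tθ_arg_mem hθ).2, arccos_le_pi_div_four.mpr (tθ_arg_mem hθ).1⟩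

theorem dθ_eq (hθ : θ ∈ Ioc 0 (π / 4)) : dθ θ = sin θ * (1 - cos (tθ θ)) := by
  have hpos : 0 < 1 + sin θ - cos θ := by
    linarith [cos_le_one θ, sin_pos_of_pos_of_lt_pi hθ.1 (by linarith [pi_pos, hθ.2])]
  rw [dθ, cos_tθ hθ]
  field_simp
  ring

theorem inner_γ₁_yθ (u : ℝ) : ⟪γ₁ u, yθ θ⟫ = dθ θ - cos (tθ θ) * (1 - cos (u - θ)) := by
  rw [γ₁, yθ, inner_vec3, dθ, cos_sub]
  ring

theorem inner_γ₂_yθ (u : ℝ) : ⟪γ₂ u, yθ θ⟫ = -(cos (tθ θ) * (sin (u + θ) - sin θ)) := by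
  rw [γ₂, yθ, inner_vec3, sin_add]
  ring

theorem inner_γ₃_yθ (hθ : θ ∈ Ioc 0 (π / 4)) (u : ℝ) :
    ⟪γ₃ u, yθ θ⟫ = dθ θ - sin θ * (1 - cos (u - tθ θ)) := by
  rw [γ₃, yθ, inner_vec3, dθ_eq hθ, cos_sub]
  ring

theorem inner_γ₄_yθ (u : ℝ) :
    ⟪γ₄ u, yθ θ⟫ = -(sin θ * (sin (u + tθ θ) - sin (tθ θ))) := by
  rw [γ₄, yθ, inner_vec3, sin_add]
  ring

end Witness

local notation "Γ" => γ₁ '' Icc (0 : ℝ) (π / 4) ∪ γ₂ '' Icc (0 : ℝ) (π / 4) ∪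
  γ₃ '' Icc (0 : ℝ) (π / 4) ∪ γ₄ '' Icc (0 : ℝ) (π / 4)

section Exposure

variable {θ : ℝ}

theorem inner_γ₁_self_yθ : ⟪γ₁ θ, yθ θ⟫ = dθ θ := by
  simp [inner_γ₁_yθ]

theorem inner_γ₃_tθ_yθ (hθ : θ ∈ Ioc 0 (π / 4)) : ⟪γ₃ (tθ θ), yθ θ⟫ = dθ θ := by
  simp [inner_γ₃_yθ hθ]

theorem inner_yθ_lt_dθ (hθ : θ ∈ Ioc 0 (π / 4)) {z : EuclideanSpace ℝ (Fin 3)} (hz : z ∈ Γ)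
    (h₁ : z ≠ γ₁ θ) (h₃ : z ≠ γ₃ (tθ θ)) : ⟪z, yθ θ⟫ < dθ θ := by
  have ⟨hθ0, hθ4⟩ := hθ
  have ⟨hT0, hT4⟩ := tθ_mem hθ
  have hπ := pi_pos
  have hsin : 0 < sin θ := sin_pos_of_pos_of_lt_pi hθ0 (by linarith)
  have hcosT : 0 < cos (tθ θ) := cos_pos_of_mem_Ioo ⟨by linarith, by linarith⟩
  have hd : 0 < dθ θ := by
    rw [dθ_eq hθ, cos_tθ hθ]
    exact mul_pos hsin (sub_pos.mpr (tθ_arg_mem hθ).2)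
  rcases hz with ((⟨u, hu, rfl⟩ | ⟨u, hu, rfl⟩) | ⟨u, hu, rfl⟩) | ⟨u, hu, rfl⟩
  · have hcos : cos (u - θ) < 1 :=
      cos_lt_one_of_abs_lt (abs_sub_lt_iff.mpr ⟨by linarith [hu.2], by linarith [hu.1]⟩)
        (sub_ne_zero.mpr (by rintro rfl; exact h₁ rfl))
    rw [inner_γ₁_yθ]
    exact sub_lt_self _ (mul_pos hcosT (by linarith))
  · have hsin_le : sin θ ≤ sin (u + θ) :=
      sin_le_sin_of_le_of_le_pi_div_two (by linarith) (by linarith [hu.2]) (by linarith [hu.1])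
    rw [inner_γ₂_yθ]
    linarith [mul_nonneg hcosT.le (sub_nonneg.mpr hsin_le)]
  · have hcos : cos (u - tθ θ) < 1 :=
      cos_lt_one_of_abs_lt (abs_sub_lt_iff.mpr ⟨by linarith [hu.2], by linarith [hu.1]⟩)
        (sub_ne_zero.mpr (by rintro rfl; exact h₃ rfl))
    rw [inner_γ₃_yθ hθ]
    exact sub_lt_self _ (mul_pos hsin (by linarith))
  · have hsin_le : sin (tθ θ) ≤ sin (u + tθ θ) :=
      sin_le_sin_of_le_of_le_pi_div_two (by linarith) (by linarith [hu.2]) (by linarith [hu.1])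
    rw [inner_γ₄_yθ]
    linarith [mul_nonneg hsin.le (sub_nonneg.mpr hsin_le)]

theorem inner_yθ_le_dθ (hθ : θ ∈ Ioc 0 (π / 4)) {z : EuclideanSpace ℝ (Fin 3)} (hz : z ∈ Γ) :
    ⟪z, yθ θ⟫ ≤ dθ θ := by
  by_cases h₁ : z = γ₁ θ
  · exact (h₁ ▸ inner_γ₁_self_yθ).le
  by_cases h₃ : z = γ₃ (tθ θ)
  · exact (h₃ ▸ inner_γ₃_tθ_yθ hθ).le
  exact (inner_yθ_lt_dθ hθ hz h₁ h₃).le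

theorem sep_inner_yθ_eq_dθ (hθ : θ ∈ Ioc 0 (π / 4)) :
    {z ∈ Γ | ⟪z, yθ θ⟫ = dθ θ} = {γ₁ θ, γ₃ (tθ θ)} := by
  ext z
  constructor
  · rintro ⟨hz, heq⟩
    by_contra h
    rw [mem_insert_iff, mem_singleton_iff, not_or] at h
    exact (inner_yθ_lt_dθ hθ hz h.1 h.2).ne heq
  · rintro (rfl | rfl)
    · exact ⟨Or.inl (Or.inl (Or.inl (mem_image_of_mem _ (Ioc_subset_Icc_self hθ)))),
        inner_γ₁_self_yθ⟩
    · exact ⟨Or.inl (Or.inr (mem_image_of_mem _ (Ioc_subset_Icc_self (tθ_mem hθ)))),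
        inner_γ₃_tθ_yθ hθ⟩

end Exposure

theorem stmt_16 (θ : ℝ) (hθ : θ ∈ Ioc (0 : ℝ) (π / 4)) :
    (∀ x ∈ convexHull ℝ (γ₁ '' Icc (0 : ℝ) (π / 4) ∪ γ₂ '' Icc (0 : ℝ) (π / 4) ∪
        γ₃ '' Icc (0 : ℝ) (π / 4) ∪ γ₄ '' Icc (0 : ℝ) (π / 4)), ⟪x, yθ θ⟫ ≤ dθ θ) ∧
    {x ∈ convexHull ℝ (γ₁ '' Icc (0 : ℝ) (π / 4) ∪ γ₂ '' Icc (0 : ℝ) (π / 4) ∪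
        γ₃ '' Icc (0 : ℝ) (π / 4) ∪ γ₄ '' Icc (0 : ℝ) (π / 4)) | ⟪x, yθ θ⟫ = dθ θ} =
      segment ℝ (γ₁ θ) (γ₃ (tθ θ)) := by
  let f : EuclideanSpace ℝ (Fin 3) →ₗ[ℝ] ℝ := (innerₗ _).flip (yθ θ)
  have hle : ∀ z ∈ Γ, f z ≤ dθ θ := fun z hz => inner_yθ_le_dθ hθ hz
  refine ⟨fun x hx => f.le_of_mem_convexHull hle hx, ?_⟩
  calc _ = convexHull ℝ {z ∈ Γ | ⟪z, yθ θ⟫ = dθ θ} := f.sep_convexHull_eq hle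
    _ = segment ℝ (γ₁ θ) (γ₃ (tθ θ)) := by rw [sep_inner_yθ_eq_dθ hθ, convexHull_pair]
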